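/- arXiv:1608.07918 — 2 statements merged into one kernel-verified Lean document; each statement's English description precedes it below -/
import Mathlib

section
/- Let 0 → L →(f₁,g₁) M₁ ⊕ M₂ →(g₂,f₂) N → 0 be a short exact sequence of finite-dimensional modules in which none of the component maps f₁ : L → M₁, g₁ : L → M₂, g₂ : M₁ → N, f₂ : M₂ → N is an isomorphism, and each of them is either injective or surjective. If f₁ is injective, then f₂ is injective. -/
namespace LinearMap

variable {R L M₁ M₂ N : Type*} [Ring R] [AddCommGroup L] [AddCommGroup M₁] [AddCommGroup M₂]
  [AddCommGroup N] [Module R L] [Module R M₁] [Module R M₂] [Module R N]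

theorem ker_le_map_ker_of_ker_coprod_le_range_prod {f₁ : L →ₗ[R] M₁} {g₁ : L →ₗ[R] M₂}
    {g₂ : M₁ →ₗ[R] N} {f₂ : M₂ →ₗ[R] N} (h : ker (g₂.coprod f₂) ≤ range (f₁.prod g₁)) :
    ker f₂ ≤ (ker f₁).map g₁ := by
  intro m hm
  have hker : ((0 : M₁), m) ∈ ker (g₂.coprod f₂) := by simpa using hm
  obtain ⟨l, hl⟩ := h hker
  obtain ⟨hf₁l, hg₁l⟩ := Prod.ext_iff.mp hl
  exact ⟨l, hf₁l, hg₁l⟩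

theorem injective_of_injective_of_ker_coprod_le_range_prod {f₁ : L →ₗ[R] M₁}
    {g₁ : L →ₗ[R] M₂} {g₂ : M₁ →ₗ[R] N} {f₂ : M₂ →ₗ[R] N}
    (h : ker (g₂.coprod f₂) ≤ range (f₁.prod g₁)) (hf₁ : Function.Injective f₁) :
    Function.Injective f₂ := by
  rw [← ker_eq_bot] at hf₁ ⊢
  simpa [hf₁] using ker_le_map_ker_of_ker_coprod_le_range_prod h

end LinearMap

theorem stmt_1_general (Λ : Type) [Ring Λ]
    (L M₁ M₂ N : Type)
    [AddCommGroup L] [Module Λ L]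
    [AddCommGroup M₁] [Module Λ M₁]
    [AddCommGroup M₂] [Module Λ M₂]
    [AddCommGroup N] [Module Λ N]
    (f₁ : L →ₗ[Λ] M₁) (g₁ : L →ₗ[Λ] M₂) (g₂ : M₁ →ₗ[Λ] N) (f₂ : M₂ →ₗ[Λ] N)
    (hex : LinearMap.range (f₁.prod g₁) = LinearMap.ker (g₂.coprod f₂)) :
    Function.Injective f₁ → Function.Injective f₂ :=
  LinearMap.injective_of_injective_of_ker_coprod_le_range_prod hex.ge

/-- Let `0 → L →(f₁,g₁) M₁ ⊕ M₂ →(g₂,f₂) N → 0` be a short exact sequence of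
finite-dimensional modules in which none of the component maps `f₁, g₁, g₂, f₂` is an
isomorphism, and each of them is either injective or surjective.
If `f₁` is injective, then `f₂` is injective. -/
theorem stmt_1 (K : Type) [Field K] (Λ : Type) [Ring Λ] [Algebra K Λ]
    [FiniteDimensional K Λ]
    (L M₁ M₂ N : Type)
    [AddCommGroup L] [Module Λ L] [Module K L] [IsScalarTower K Λ L]
    [FiniteDimensional K L]
    [AddCommGroup M₁] [Module Λ M₁] [Module K M₁] [IsScalarTower K Λ M₁]
    [FiniteDimensional K M₁]
    [AddCommGroup M₂] [Module Λ M₂] [Module K M₂] [IsScalarTower K Λ M₂]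
    [FiniteDimensional K M₂]
    [AddCommGroup N] [Module Λ N] [Module K N] [IsScalarTower K Λ N]
    [FiniteDimensional K N]
    (f₁ : L →ₗ[Λ] M₁) (g₁ : L →ₗ[Λ] M₂) (g₂ : M₁ →ₗ[Λ] N) (f₂ : M₂ →ₗ[Λ] N)
    (hinj : Function.Injective (f₁.prod g₁))
    (hsurj : Function.Surjective (g₂.coprod f₂))
    (hex : LinearMap.range (f₁.prod g₁) = LinearMap.ker (g₂.coprod f₂))
    (hni₁ : ¬ Function.Bijective f₁) (hni₂ : ¬ Function.Bijective g₁)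
    (hni₃ : ¬ Function.Bijective g₂) (hni₄ : ¬ Function.Bijective f₂)
    (hme₁ : Function.Injective f₁ ∨ Function.Surjective f₁)
    (hme₂ : Function.Injective g₁ ∨ Function.Surjective g₁)
    (hme₃ : Function.Injective g₂ ∨ Function.Surjective g₂)
    (hme₄ : Function.Injective f₂ ∨ Function.Surjective f₂) :
    Function.Injective f₁ → Function.Injective f₂ :=
  stmt_1_general Λ L M₁ M₂ N f₁ g₁ g₂ f₂ hex
end

section
/- For the linearly oriented quiver 1 → 2 → ⋯ → n of type Aₙ, every indecomposable representation over a field K is isomorphic to an interval representation [a,b] for some 1 ≤ a ≤ b ≤ n, where [a,b] places K at each vertex i with a ≤ i ≤ b, zero elsewhere, with identity maps between adjacent copies of K. -/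
open Submodule

/-- A representation of the linearly oriented `Aₙ` quiver `1 → 2 → ⋯ → n` over `K`.
Vertex `v` (for `1 ≤ v ≤ n`) is indexed by `⟨v-1, _⟩ : Fin n`. -/
structure LinRep (K : Type) [Field K] (n : ℕ) where
  V : Fin n → Type
  [acg : ∀ i, AddCommGroup (V i)]
  [mod : ∀ i, Module K (V i)]
  f : ∀ (i : ℕ) (h : i + 1 < n), V ⟨i, Nat.lt_of_succ_lt h⟩ →ₗ[K] V ⟨i + 1, h⟩

attribute [instance] LinRep.acg LinRep.mod

variable {K : Type} [Field K] {n : ℕ}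

/-- Morphisms of representations of the linearly oriented `Aₙ` quiver. -/
structure LinRepHom (M N : LinRep K n) where
  φ : ∀ i, M.V i →ₗ[K] N.V i
  comm : ∀ (i : ℕ) (h : i + 1 < n),
    (N.f i h).comp (φ ⟨i, Nat.lt_of_succ_lt h⟩) = (φ ⟨i + 1, h⟩).comp (M.f i h)

/-- The identity morphism. -/
def LinRepHom.id (M : LinRep K n) : LinRepHom M M :=
  ⟨fun _ => LinearMap.id, fun _ _ => by ext x; simp⟩

/-- Composition of morphisms of representations. -/
def LinRepHom.comp {M N P : LinRep K n} (g : LinRepHom N P) (f : LinRepHom M N) :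
    LinRepHom M P where
  φ i := (g.φ i).comp (f.φ i)
  comm i h := by
    rw [← LinearMap.comp_assoc, g.comm i h, LinearMap.comp_assoc, f.comm i h,
      ← LinearMap.comp_assoc]

/-- A representation is zero if all its vector spaces are trivial. -/
def LinRep.IsZero (M : LinRep K n) : Prop := ∀ i, ∀ x : M.V i, x = 0

/-- A morphism of representations is zero. -/
def LinRepHom.IsZero {M N : LinRep K n} (f : LinRepHom M N) : Prop :=
  ∀ i, ∀ x : M.V i, f.φ i x = 0

/-- The direct sum of two representations. -/
def LinRep.dsum (M N : LinRep K n) : LinRep K n where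
  V i := M.V i × N.V i
  f i h := (M.f i h).prodMap (N.f i h)

/-- Two representations are isomorphic if there is a morphism which is bijective
at every vertex. -/
def LinRepIso (M N : LinRep K n) : Prop :=
  ∃ g : LinRepHom M N, ∀ i, Function.Bijective (g.φ i)

/-- A representation is indecomposable if it is nonzero and not isomorphic to the
direct sum of two nonzero representations. -/
def LinRep.Indec (M : LinRep K n) : Prop :=
  ¬ M.IsZero ∧ ∀ N P : LinRep K n, LinRepIso M (N.dsum P) → N.IsZero ∨ P.IsZero

/-- The fibre of the interval representation `[a,b]` at vertex `v`, as a submodule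
of `K`: all of `K` if `a ≤ v ≤ b` and zero otherwise. -/
def ivSpace (K : Type) [Field K] (a b v : ℕ) : Submodule K K :=
  if a ≤ v ∧ v ≤ b then ⊤ else ⊥

open Classical in
/-- The canonical map between two `⊤/⊥` submodules of `K`:
the inclusion if possible, and zero otherwise. -/
noncomputable def ivMap (K : Type) [Field K] (S T : Submodule K K) : S →ₗ[K] T :=
  if h : S ≤ T then Submodule.inclusion h else 0

/-- The interval representation `[a,b]`: `K` at each vertex `v` with `a ≤ v ≤ b`,
zero elsewhere, with identity maps between adjacent copies of `K`. -/
noncomputable def interval (K : Type) [Field K] (n a b : ℕ) : LinRep K n where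
  V i := ↥(ivSpace K a b ((i : ℕ) + 1))
  f i _ := ivMap K _ _


/-!
Let `a` be the first vertex where `M` is nonzero, pick `0 ≠ x ∈ M_a`, and let `b` be the last
vertex reached by `x` along the path maps `M_a → M_j`. The images of `x` span a subrepresentation
isomorphic to `[a+1, b+1]` (vertices are `0`-based internally). Choosing a complement `W` of the
line spanned by the image of `x` at `b`, the preimages of `W` at all vertices form a complementary
subrepresentation. Indecomposability forces the latter to vanish, so `M` is the interval.
-/

theorem Submodule.isCompl_span_singleton_comap {K V V' : Type*} [DivisionRing K] [AddCommGroup V]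
    [Module K V] [AddCommGroup V'] [Module K V'] {g : V →ₗ[K] V'} {y : V} {W : Submodule K V'}
    (hW : IsCompl (K ∙ g y) W) (hy : g y ≠ 0) : IsCompl (K ∙ y) (W.comap g) := by
  constructor
  · rw [Submodule.disjoint_def]
    intro v hv hvW
    obtain ⟨k, rfl⟩ := Submodule.mem_span_singleton.1 hv
    have hk : k • g y ∈ (K ∙ g y) ⊓ W :=
      ⟨Submodule.smul_mem _ _ (Submodule.mem_span_singleton_self _), by simpa using hvW⟩
    rw [hW.inf_eq_bot, Submodule.mem_bot, smul_eq_zero] at hk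
    rcases hk with hk | hk
    · rw [hk, zero_smul]
    · exact absurd hk hy
  · rw [codisjoint_iff, Submodule.eq_top_iff']
    intro v
    obtain ⟨s, hs, w, hw, hsw⟩ :=
      Submodule.mem_sup.1 (hW.sup_eq_top ▸ Submodule.mem_top : g v ∈ (K ∙ g y) ⊔ W)
    obtain ⟨k, rfl⟩ := Submodule.mem_span_singleton.1 hs
    refine Submodule.mem_sup.2
      ⟨k • y, Submodule.smul_mem _ _ (Submodule.mem_span_singleton_self y), v - k • y, ?_,
        add_sub_cancel _ _⟩
    rw [Submodule.mem_comap, map_sub, map_smul, ← hsw, add_sub_cancel_left]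
    exact hw

theorem ivSpace_succ (a b v : ℕ) : ivSpace K (a + 1) (b + 1) (v + 1) = ivSpace K a b v := by
  simp only [ivSpace, Nat.add_le_add_iff_right]

theorem ivMap_apply_of_eq_top {S T : Submodule K K} (hT : T = ⊤) (c : S) :
    (ivMap K S T c : K) = c := by
  rw [ivMap, dif_pos (hT ▸ le_top)]
  rfl

theorem LinRepIso.symm {M N : LinRep K n} (h : LinRepIso M N) : LinRepIso N M := by
  obtain ⟨g, hg⟩ := h
  let e i := LinearEquiv.ofBijective (g.φ i) (hg i)
  refine ⟨⟨fun i => (e i).symm.toLinearMap, fun i h => ?_⟩, fun i => (e i).symm.bijective⟩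
  ext y
  apply (e ⟨i + 1, h⟩).injective
  have := LinearMap.congr_fun (g.comm i h) ((e _).symm y)
  simp only [LinearMap.comp_apply] at this
  simp [e, ← this]

namespace LinRep

variable (M : LinRep K n)

/-- The composite `M_a → M_j` of the structure maps, taken to be `0` when `j < a`. -/
def pathMap (a : ℕ) (ha : a < n) :
    ∀ (j : ℕ) (hj : j < n), M.V ⟨a, ha⟩ →ₗ[K] M.V ⟨j, hj⟩
  | 0, _ => if e : a = 0 then cast (by subst e; rfl) (LinearMap.id (R := K) (M := M.V ⟨a, ha⟩))
      else 0
  | j + 1, hj => if e : a = j + 1 then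
      cast (by subst e; rfl) (LinearMap.id (R := K) (M := M.V ⟨a, ha⟩))
      else M.f j hj ∘ₗ pathMap a ha j (Nat.lt_of_succ_lt hj)

theorem pathMap_self (a : ℕ) (ha : a < n) : M.pathMap a ha a ha = LinearMap.id := by
  cases a <;> exact (dif_pos rfl).trans (cast_eq _ _)

theorem pathMap_of_lt {a : ℕ} (ha : a < n) : ∀ {j : ℕ} (hj : j < n), j < a →
    M.pathMap a ha j hj = 0
  | 0, _, hja => dif_neg (by omega)
  | j + 1, hj, hja => by
    rw [pathMap, dif_neg (by omega), pathMap_of_lt ha _ (by omega), LinearMap.comp_zero]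

theorem pathMap_succ {a j : ℕ} (ha : a < n) (hj : j + 1 < n) (haj : a ≤ j) :
    M.pathMap a ha (j + 1) hj = M.f j hj ∘ₗ M.pathMap a ha j (Nat.lt_of_succ_lt hj) :=
  dif_neg (by omega)

theorem pathMap_comp {a i j : ℕ} (ha : a < n) (hi : i < n) (hj : j < n) (hai : a ≤ i)
    (hij : i ≤ j) : M.pathMap i hi j hj ∘ₗ M.pathMap a ha i hi = M.pathMap a ha j hj := by
  induction j, hij using Nat.le_induction with
  | base => rw [pathMap_self, LinearMap.id_comp]
  | succ j hij ih =>
    rw [pathMap_succ _ _ _ hij, pathMap_succ _ _ _ (hai.trans hij), LinearMap.comp_assoc, ih]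

theorem pathMap_comp_f {i j : ℕ} (hi : i + 1 < n) (hj : j < n) (hij : i + 1 ≤ j) :
    M.pathMap (i + 1) hi j hj ∘ₗ M.f i hi = M.pathMap i (Nat.lt_of_succ_lt hi) j hj := by
  have hf : M.f i hi = M.pathMap i (Nat.lt_of_succ_lt hi) (i + 1) hi := by
    rw [pathMap_succ _ _ _ le_rfl, pathMap_self, LinearMap.comp_id]
  rw [hf, pathMap_comp _ _ _ _ (Nat.le_succ i) hij]

def IsSubrep (U : ∀ i, Submodule K (M.V i)) : Prop :=
  ∀ (i : ℕ) (h : i + 1 < n),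
    U ⟨i, Nat.lt_of_succ_lt h⟩ ≤ (U ⟨i + 1, h⟩).comap (M.f i h)

def restrict (U : ∀ i, Submodule K (M.V i)) (hU : M.IsSubrep U) : LinRep K n where
  V i := U i
  f i h := (M.f i h).restrict (hU i h)

variable {M}

theorem eq_bot_of_isZero_restrict {U : ∀ i, Submodule K (M.V i)} {hU : M.IsSubrep U}
    (h : (M.restrict U hU).IsZero) (i : Fin n) : U i = ⊥ :=
  (Submodule.eq_bot_iff _).2 fun v hv => congrArg Subtype.val (h i ⟨v, hv⟩)

theorem iso_dsum_restrict_of_isCompl {U W : ∀ i, Submodule K (M.V i)} (hU : M.IsSubrep U)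
    (hW : M.IsSubrep W) (hUW : ∀ i, IsCompl (U i) (W i)) :
    LinRepIso M ((M.restrict U hU).dsum (M.restrict W hW)) :=
  LinRepIso.symm ⟨⟨fun i => (U i).subtype.coprod (W i).subtype, fun i h =>
      LinearMap.ext fun _ => map_add (M.f i h) _ _⟩,
    fun i => (Submodule.prodEquivOfIsCompl _ _ (hUW i)).bijective⟩

section Orbit

variable (M) {a b : ℕ} (ha : a < n) (hb : b < n) (x : M.V ⟨a, ha⟩)

def orbit : ∀ i : Fin n, Submodule K (M.V i) := fun i => K ∙ M.pathMap a ha i i.2 x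

theorem orbit_isSubrep : M.IsSubrep (M.orbit ha x) := by
  intro i h
  rw [orbit, Submodule.span_singleton_le_iff_mem, Submodule.mem_comap]
  by_cases hai : a ≤ i
  · rw [← LinearMap.comp_apply, ← pathMap_succ _ _ _ hai]
    exact Submodule.mem_span_singleton_self _
  · rw [pathMap_of_lt _ _ _ (show i < a by omega), LinearMap.zero_apply, map_zero]
    exact Submodule.zero_mem _

theorem le_and_le_of_pathMap_apply_ne_zero
    (hdie : ∀ (j : ℕ) (hj : j < n), b < j → M.pathMap a ha j hj x = 0) {j : ℕ} (hj : j < n)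
    (hx : M.pathMap a ha j hj x ≠ 0) : a ≤ j ∧ j ≤ b := by
  refine ⟨?_, ?_⟩
  · by_contra hja
    exact hx (by rw [pathMap_of_lt _ _ _ (by omega), LinearMap.zero_apply])
  · by_contra hbj
    exact hx (hdie j hj (by omega))

theorem pathMap_apply_ne_zero_of_le_of_le (hxb : M.pathMap a ha b hb x ≠ 0) {j : ℕ}
    (hj : j < n) (haj : a ≤ j) (hjb : j ≤ b) : M.pathMap a ha j hj x ≠ 0 := fun hx =>
  hxb (by rw [← M.pathMap_comp ha hj hb haj hjb, LinearMap.comp_apply, hx, map_zero])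

noncomputable def orbitHom
    (hdie : ∀ (j : ℕ) (hj : j < n), b < j → M.pathMap a ha j hj x = 0) :
    LinRepHom (interval K n (a + 1) (b + 1)) M where
  φ i := (ivSpace K (a + 1) (b + 1) (i + 1)).subtype.smulRight (M.pathMap a ha i i.2 x)
  comm i h := by
    refine LinearMap.ext fun (c : ivSpace K (a + 1) (b + 1) (i + 1)) => ?_
    change M.f i h ((c : K) • M.pathMap a ha i _ x) =
      (ivMap K _ (ivSpace K (a + 1) (b + 1) (i + 1 + 1)) c : K) • M.pathMap a ha (i + 1) h x
    by_cases hai : a ≤ i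
    · rw [map_smul, ← LinearMap.comp_apply, ← pathMap_succ _ _ _ hai]
      by_cases hx : M.pathMap a ha (i + 1) h x = 0
      · rw [hx, smul_zero, smul_zero]
      · rw [ivMap_apply_of_eq_top ((ivSpace_succ _ _ _).trans
          (if_pos (M.le_and_le_of_pathMap_apply_ne_zero ha x hdie h hx)))]
    · have hc : (c : K) = 0 := by
        have hbot : ivSpace K (a + 1) (b + 1) (i + 1) = ⊥ := if_neg (by omega)
        exact (Submodule.mem_bot K).1 (hbot ▸ c.2)
      simp [show c = 0 from Subtype.ext hc]

theorem orbitHom_bijective (hxb : M.pathMap a ha b hb x ≠ 0)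
    (hdie : ∀ (j : ℕ) (hj : j < n), b < j → M.pathMap a ha j hj x = 0) (i : Fin n)
    (htop : M.orbit ha x i = ⊤) : Function.Bijective ((M.orbitHom ha x hdie).φ i) := by
  by_cases hx : M.pathMap a ha i i.2 x = 0
  · have hS : ivSpace K (a + 1) (b + 1) (i + 1) = ⊥ := by
      rw [ivSpace_succ]
      exact if_neg fun ⟨haj, hjb⟩ =>
        M.pathMap_apply_ne_zero_of_le_of_le ha hb x hxb i.2 haj hjb hx
    rw [orbit, hx, Submodule.span_zero_singleton] at htop
    have hV : Subsingleton (M.V i) :=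
      (Submodule.subsingleton_iff K).1 (subsingleton_of_bot_eq_top htop)
    have hS' : Subsingleton ((interval K n (a + 1) (b + 1)).V i) := by
      change Subsingleton (ivSpace K (a + 1) (b + 1) (i + 1))
      rw [hS]
      infer_instance
    exact ⟨Function.injective_of_subsingleton _, fun v => ⟨0, Subsingleton.elim _ _⟩⟩
  · have hS : ivSpace K (a + 1) (b + 1) (i + 1) = ⊤ := (ivSpace_succ _ _ _).trans
      (if_pos (M.le_and_le_of_pathMap_apply_ne_zero ha x hdie i.2 hx))
    refine ⟨fun c c' hcc => Subtype.ext (smul_left_injective K hx hcc), fun v => ?_⟩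
    obtain ⟨k, hk⟩ :=
      Submodule.mem_span_singleton.1 (htop ▸ Submodule.mem_top : v ∈ M.orbit ha x i)
    exact ⟨⟨k, hS ▸ Submodule.mem_top⟩, hk⟩

def comapPath (W : Submodule K (M.V ⟨b, hb⟩)) : ∀ i : Fin n, Submodule K (M.V i) :=
  fun i => W.comap (M.pathMap i i.2 b hb)

theorem comapPath_isSubrep (W : Submodule K (M.V ⟨b, hb⟩)) : M.IsSubrep (M.comapPath hb W) := by
  intro i h v hv
  change M.pathMap (i + 1) h b hb (M.f i h v) ∈ W
  by_cases hib : i + 1 ≤ b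
  · rw [← LinearMap.comp_apply, pathMap_comp_f _ _ _ hib]
    exact hv
  · rw [pathMap_of_lt _ _ _ (by omega), LinearMap.zero_apply]
    exact W.zero_mem

theorem isCompl_orbit_comapPath
    (hmin : ∀ (j : ℕ) (hj : j < n), j < a → ∀ v : M.V ⟨j, hj⟩, v = 0)
    (hxb : M.pathMap a ha b hb x ≠ 0)
    (hdie : ∀ (j : ℕ) (hj : j < n), b < j → M.pathMap a ha j hj x = 0)
    {W : Submodule K (M.V ⟨b, hb⟩)} (hW : IsCompl (K ∙ M.pathMap a ha b hb x) W) (i : Fin n) :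
    IsCompl (M.orbit ha x i) (M.comapPath hb W i) := by
  by_cases hi : a ≤ i ∧ i ≤ b
  · have hgx : M.pathMap i i.2 b hb (M.pathMap a ha i i.2 x) = M.pathMap a ha b hb x := by
      rw [← LinearMap.comp_apply, M.pathMap_comp ha i.2 hb hi.1 hi.2]
    exact Submodule.isCompl_span_singleton_comap (hgx ▸ hW) (hgx ▸ hxb)
  · have hx : M.pathMap a ha i i.2 x = 0 :=
      not_not.1 (mt (M.le_and_le_of_pathMap_apply_ne_zero ha x hdie i.2) hi)
    have hWtop : M.comapPath hb W i = ⊤ := by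
      refine Submodule.eq_top_iff'.2 fun v => ?_
      change M.pathMap i i.2 b hb v ∈ W
      rcases not_and_or.1 hi with hia | hib
      · rw [hmin i i.2 (by omega) v, map_zero]
        exact W.zero_mem
      · rw [pathMap_of_lt _ _ _ (by omega), LinearMap.zero_apply]
        exact W.zero_mem
    rw [orbit, hx, Submodule.span_zero_singleton, hWtop]
    exact isCompl_bot_top

end Orbit

theorem exists_orbit_of_not_isZero (hM : ¬ M.IsZero) :
    ∃ (a b : ℕ) (ha : a < n) (hb : b < n) (x : M.V ⟨a, ha⟩),
      (∀ (j : ℕ) (hj : j < n), j < a → ∀ v : M.V ⟨j, hj⟩, v = 0) ∧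
      M.pathMap a ha b hb x ≠ 0 ∧
      ∀ (j : ℕ) (hj : j < n), b < j → M.pathMap a ha j hj x = 0 := by
  classical
  have hex : ∃ j, ∃ hj : j < n, ∃ v : M.V ⟨j, hj⟩, v ≠ 0 := by
    simp only [IsZero, not_forall] at hM
    obtain ⟨i, v, hv⟩ := hM
    exact ⟨i, i.2, v, hv⟩
  obtain ⟨ha, x, hx⟩ := Nat.find_spec hex
  let reaches j := ∃ hj : j < n, M.pathMap _ ha j hj x ≠ 0
  have hreach : reaches (Nat.find hex) := ⟨ha, by rwa [pathMap_self]⟩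
  obtain ⟨hb, hxb⟩ := Nat.findGreatest_spec (P := reaches) (n := n - 1) (by omega) hreach
  refine ⟨_, _, ha, hb, x, fun j hj hja v => ?_, hxb, fun j hj hbj => ?_⟩
  · by_contra hv
    exact Nat.find_min hex hja ⟨hj, v, hv⟩
  · by_contra hx
    exact Nat.findGreatest_is_greatest hbj (by omega) ⟨hj, hx⟩

end LinRep

theorem stmt_3_general (K : Type) [Field K] (n : ℕ) (M : LinRep K n)
    (hM : M.Indec) :
    ∃ a b : ℕ, 1 ≤ a ∧ a ≤ b ∧ b ≤ n ∧ LinRepIso M (interval K n a b) := by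
  obtain ⟨a, b, ha, hb, x, hmin, hxb, hdie⟩ := LinRep.exists_orbit_of_not_isZero hM.1
  obtain ⟨W, hW⟩ := Submodule.exists_isCompl (K ∙ M.pathMap a ha b hb x)
  have hcompl := M.isCompl_orbit_comapPath ha hb x hmin hxb hdie hW
  have hab := M.le_and_le_of_pathMap_apply_ne_zero ha x hdie hb hxb
  rcases hM.2 _ _ (M.iso_dsum_restrict_of_isCompl (M.orbit_isSubrep ha x)
    (M.comapPath_isSubrep hb W) hcompl) with hS | hW0
  · refine absurd (LinRep.eq_bot_of_isZero_restrict hS ⟨a, ha⟩) ?_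
    exact Submodule.span_singleton_eq_bot.not.2
      (M.pathMap_apply_ne_zero_of_le_of_le ha hb x hxb ha le_rfl hab.1)
  · refine ⟨a + 1, b + 1, by omega, by omega, by omega, LinRepIso.symm ⟨M.orbitHom ha x hdie,
      fun i => M.orbitHom_bijective ha hb x hxb hdie i ?_⟩⟩
    exact eq_top_of_isCompl_bot (LinRep.eq_bot_of_isZero_restrict hW0 i ▸ hcompl i)

/-- For the linearly oriented quiver `1 → 2 → ⋯ → n` of type `Aₙ`, every
indecomposable (finite-dimensional) representation over a field `K` is isomorphic to
an interval representation `[a,b]` for some `1 ≤ a ≤ b ≤ n`. -/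
theorem stmt_3 (K : Type) [Field K] (n : ℕ) (M : LinRep K n)
    (hfd : ∀ i, FiniteDimensional K (M.V i)) (hM : M.Indec) :
    ∃ a b : ℕ, 1 ≤ a ∧ a ≤ b ∧ b ≤ n ∧ LinRepIso M (interval K n a b) :=
  stmt_3_general K n M hM
end
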